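/- (Spectral norm of the A-NC weight matrix.) Let L be the Laplacian of a connected simple undirected graph on N vertices with eigenvalues 0 = λ₁(L) < λ₂(L) ≤ … ≤ λ_N(L), let J = 𝟏𝟏ᵀ, and set γ₂(α) = ρ(I − αL − (1/N)J), the spectral radius. Then: (1) for 0 < α < 2/λ_N(L), γ₂(α) < 1; (2) for 0 < α ≤ 2/(λ₂(L) + λ_N(L)), γ₂(α) = 1 − αλ₂(L); and (3) over the range 0 < α < 2/λ_N(L), γ₂(α) attains its minimum at α• = 2/(λ₂(L) + λ_N(L)). -/

import Mathlib

open Matrix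

/-- `L` is the Laplacian matrix `L = D − A` of a simple undirected graph on `N` vertices. -/
def IsGraphLaplacian {N : ℕ} (L : Matrix (Fin N) (Fin N) ℝ) : Prop :=
  L.IsSymm ∧ (∀ i j, i ≠ j → L i j = 0 ∨ L i j = -1) ∧ (∀ i, ∑ j, L i j = 0)

/-- Second-smallest eigenvalue (algebraic connectivity) via Courant–Fischer. -/
noncomputable def lambda2 {N : ℕ} (L : Matrix (Fin N) (Fin N) ℝ) : ℝ :=
  sInf {r | ∃ x : Fin N → ℝ, (∑ i, (x i) ^ 2) = 1 ∧ (∑ i, x i) = 0 ∧ r = x ⬝ᵥ L.mulVec x}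

/-- Largest eigenvalue via the Rayleigh quotient. -/
noncomputable def lambdaN {N : ℕ} (L : Matrix (Fin N) (Fin N) ℝ) : ℝ :=
  sSup {r | ∃ x : Fin N → ℝ, (∑ i, (x i) ^ 2) = 1 ∧ r = x ⬝ᵥ L.mulVec x}

/-- Spectral radius of a symmetric real matrix, via the Rayleigh quotient
(for symmetric matrices this equals the induced 2-norm). -/
noncomputable def specNorm {N : ℕ} (M : Matrix (Fin N) (Fin N) ℝ) : ℝ :=
  sSup {r | ∃ x : Fin N → ℝ, (∑ i, (x i) ^ 2) = 1 ∧ r = |x ⬝ᵥ M.mulVec x|}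

/-!
Write a unit vector `x` as `y + c𝟏` with `∑ y = 0`. Since `L` is symmetric with `L𝟏 = 0`, the
quadratic form of `I - αL - J/N` at `x` is `|y|² - α yᵀLy`, and `λ₂|y|² ≤ yᵀLy ≤ λ_N|y|²` with
`|y| ≤ 1`, so `γ₂(α) ≤ max (1 - αλ₂) (αλ_N - 1)`. Conversely, evaluating the form at unit vectors
orthogonal to `𝟏`, resp. at arbitrary unit vectors, bounds `λ₂` from below and `λ_N` from above in
terms of `γ₂(α)`, which gives equality. All three claims are then facts about the piecewise linear
function `α ↦ max (1 - αλ₂) (αλ_N - 1)`, whose two pieces cross at `α = 2/(λ₂ + λ_N)`.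
-/

section

variable {N : ℕ} {L : Matrix (Fin N) (Fin N) ℝ} {α : ℝ}

lemma abs_dotProduct_mulVec_le_sum_abs (M : Matrix (Fin N) (Fin N) ℝ) {x : Fin N → ℝ}
    (hx : ∑ i, x i ^ 2 = 1) : |x ⬝ᵥ M *ᵥ x| ≤ ∑ i, ∑ j, |M i j| := by
  have hx1 : ∀ i, |x i| ≤ 1 := fun i => (sq_le_one_iff_abs_le_one _).1 <|
    hx ▸ Finset.single_le_sum (fun j _ => sq_nonneg (x j)) (Finset.mem_univ i)
  calc |x ⬝ᵥ M *ᵥ x| = |∑ i, ∑ j, M i j * (x i * x j)| := by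
        simp only [dotProduct, mulVec, Finset.mul_sum]
        exact congrArg _ (Finset.sum_congr rfl fun i _ => Finset.sum_congr rfl fun j _ => by ring)
    _ ≤ ∑ i, ∑ j, |M i j * (x i * x j)| :=
        (Finset.abs_sum_le_sum_abs _ _).trans
          (Finset.sum_le_sum fun i _ => Finset.abs_sum_le_sum_abs _ _)
    _ ≤ ∑ i, ∑ j, |M i j| := by
        refine Finset.sum_le_sum fun i _ => Finset.sum_le_sum fun j _ => ?_
        rw [abs_mul, abs_mul]
        exact mul_le_of_le_one_right (abs_nonneg _)
          (mul_le_one₀ (hx1 i) (abs_nonneg _) (hx1 j))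

lemma lambda2_le {z : Fin N → ℝ}
    (hz1 : ∑ i, z i ^ 2 = 1) (hz0 : ∑ i, z i = 0) : lambda2 L ≤ z ⬝ᵥ L *ᵥ z := by
  refine csInf_le ⟨-∑ i, ∑ j, |L i j|, ?_⟩ ⟨z, hz1, hz0, rfl⟩
  rintro _ ⟨x, hx, -, rfl⟩
  linarith [neg_abs_le (x ⬝ᵥ L *ᵥ x), abs_dotProduct_mulVec_le_sum_abs L hx]

lemma le_lambdaN {z : Fin N → ℝ}
    (hz1 : ∑ i, z i ^ 2 = 1) : z ⬝ᵥ L *ᵥ z ≤ lambdaN L := by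
  refine le_csSup ⟨∑ i, ∑ j, |L i j|, ?_⟩ ⟨z, hz1, rfl⟩
  rintro _ ⟨x, hx, rfl⟩
  linarith [le_abs_self (x ⬝ᵥ L *ᵥ x), abs_dotProduct_mulVec_le_sum_abs L hx]

lemma abs_le_specNorm (M : Matrix (Fin N) (Fin N) ℝ) {x : Fin N → ℝ}
    (hx1 : ∑ i, x i ^ 2 = 1) : |x ⬝ᵥ M *ᵥ x| ≤ specNorm M := by
  refine le_csSup ⟨∑ i, ∑ j, |M i j|, ?_⟩ ⟨x, hx1, rfl⟩
  rintro _ ⟨y, hy, rfl⟩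
  exact abs_dotProduct_mulVec_le_sum_abs M hy

lemma specNorm_le {M : Matrix (Fin N) (Fin N) ℝ} {b : ℝ} (hb : 0 ≤ b)
    (h : ∀ x : Fin N → ℝ, ∑ i, x i ^ 2 = 1 → |x ⬝ᵥ M *ᵥ x| ≤ b) : specNorm M ≤ b :=
  Real.sSup_le (by rintro _ ⟨x, hx, rfl⟩; exact h x hx) hb

lemma exists_sq_mul_sum_sq_eq_one {y : Fin N → ℝ} (hy : y ≠ 0) :
    ∃ c : ℝ, c ^ 2 * ∑ i, y i ^ 2 = 1 := by
  have hpos : 0 < ∑ i, y i ^ 2 := by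
    obtain ⟨i, hi⟩ := Function.ne_iff.1 hy
    exact Finset.sum_pos' (fun j _ => sq_nonneg (y j)) ⟨i, Finset.mem_univ i, sq_pos_of_ne_zero hi⟩
  refine ⟨(√(∑ i, y i ^ 2))⁻¹, ?_⟩
  rw [inv_pow, Real.sq_sqrt hpos.le, inv_mul_cancel₀ hpos.ne']

lemma sum_sq_smul (c : ℝ) (y : Fin N → ℝ) : ∑ i, (c • y) i ^ 2 = c ^ 2 * ∑ i, y i ^ 2 := by
  simp only [Pi.smul_apply, smul_eq_mul, mul_pow, Finset.mul_sum]

lemma dotProduct_mulVec_smul (M : Matrix (Fin N) (Fin N) ℝ) (c : ℝ) (y : Fin N → ℝ) :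
    (c • y) ⬝ᵥ M *ᵥ (c • y) = c ^ 2 * (y ⬝ᵥ M *ᵥ y) := by
  rw [mulVec_smul, smul_dotProduct, dotProduct_smul, smul_eq_mul, smul_eq_mul]; ring

lemma exists_sum_sq_eq_one_sum_eq_zero (hN : 1 < N) :
    ∃ z : Fin N → ℝ, ∑ i, z i ^ 2 = 1 ∧ ∑ i, z i = 0 := by
  set y : Fin N → ℝ := Pi.single ⟨0, by omega⟩ 1 - Pi.single ⟨1, hN⟩ 1
  have hy0 : ∑ i, y i = 0 := by simp [y, Finset.sum_sub_distrib]
  have hy : y ≠ 0 := fun h => by simpa [y, Fin.ext_iff] using congrFun h ⟨0, by omega⟩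
  obtain ⟨c, hc⟩ := exists_sq_mul_sum_sq_eq_one hy
  exact ⟨c • y, by rw [sum_sq_smul, hc], by simp [← Finset.mul_sum, hy0]⟩

lemma one_lt_of_lambda2_pos (h : 0 < lambda2 L) : 1 < N := by
  by_contra! hN
  have : Subsingleton (Fin N) := by
    rw [← not_nontrivial_iff_subsingleton, Fin.nontrivial_iff_two_le]; omega
  refine h.ne' ?_
  rw [lambda2]
  convert Real.sInf_empty
  refine Set.eq_empty_of_forall_notMem ?_
  rintro _ ⟨x, hx1, hx0, -⟩
  have hx : x = 0 := funext fun i => by rwa [Fintype.sum_subsingleton _ i] at hx0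
  simp [hx] at hx1

lemma le_lambda2 (hN : 1 < N) {b : ℝ}
    (h : ∀ z : Fin N → ℝ, ∑ i, z i ^ 2 = 1 → ∑ i, z i = 0 → b ≤ z ⬝ᵥ L *ᵥ z) :
    b ≤ lambda2 L := by
  obtain ⟨z, hz1, hz0⟩ := exists_sum_sq_eq_one_sum_eq_zero hN
  exact le_csInf ⟨_, z, hz1, hz0, rfl⟩ (by rintro _ ⟨x, hx1, hx0, rfl⟩; exact h x hx1 hx0)

lemma lambdaN_le (hN : 0 < N) {b : ℝ}
    (h : ∀ z : Fin N → ℝ, ∑ i, z i ^ 2 = 1 → z ⬝ᵥ L *ᵥ z ≤ b) : lambdaN L ≤ b :=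
  csSup_le ⟨_, Pi.single ⟨0, hN⟩ 1, by simp [Pi.single_apply], rfl⟩
    (by rintro _ ⟨x, hx1, rfl⟩; exact h x hx1)

lemma lambda2_le_lambdaN (hN : 1 < N) : lambda2 L ≤ lambdaN L := by
  obtain ⟨z, hz1, hz0⟩ := exists_sum_sq_eq_one_sum_eq_zero hN
  exact (lambda2_le hz1 hz0).trans (le_lambdaN hz1)

lemma lambda2_mul_sum_sq_le {y : Fin N → ℝ} (hy0 : ∑ i, y i = 0) :
    lambda2 L * ∑ i, y i ^ 2 ≤ y ⬝ᵥ L *ᵥ y := by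
  rcases eq_or_ne y 0 with rfl | hy
  · simp
  obtain ⟨c, hc⟩ := exists_sq_mul_sum_sq_eq_one hy
  have h := lambda2_le (L := L) (z := c • y) (by rw [sum_sq_smul, hc])
    (by simp [← Finset.mul_sum, hy0])
  rw [dotProduct_mulVec_smul] at h
  calc lambda2 L * ∑ i, y i ^ 2 ≤ c ^ 2 * (y ⬝ᵥ L *ᵥ y) * ∑ i, y i ^ 2 :=
        mul_le_mul_of_nonneg_right h (Finset.sum_nonneg fun i _ => sq_nonneg _)
    _ = y ⬝ᵥ L *ᵥ y := by rw [mul_comm (c ^ 2), mul_assoc, hc, mul_one]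

lemma dotProduct_mulVec_le_lambdaN_mul (y : Fin N → ℝ) :
    y ⬝ᵥ L *ᵥ y ≤ lambdaN L * ∑ i, y i ^ 2 := by
  rcases eq_or_ne y 0 with rfl | hy
  · simp
  obtain ⟨c, hc⟩ := exists_sq_mul_sum_sq_eq_one hy
  have h := le_lambdaN (L := L) (z := c • y) (by rw [sum_sq_smul, hc])
  rw [dotProduct_mulVec_smul] at h
  calc y ⬝ᵥ L *ᵥ y = c ^ 2 * (y ⬝ᵥ L *ᵥ y) * ∑ i, y i ^ 2 := by
        rw [mul_comm (c ^ 2), mul_assoc, hc, mul_one]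
    _ ≤ lambdaN L * ∑ i, y i ^ 2 :=
        mul_le_mul_of_nonneg_right h (Finset.sum_nonneg fun i _ => sq_nonneg _)

lemma mulVec_const_eq_zero (hrow : ∀ i, ∑ j, L i j = 0) (c : ℝ) :
    L *ᵥ (fun _ => c) = 0 := by
  ext i
  simp [mulVec, dotProduct, ← Finset.sum_mul, hrow i]

lemma dotProduct_mulVec_sub_const (hsym : L.IsSymm) (hrow : ∀ i, ∑ j, L i j = 0)
    (x : Fin N → ℝ) (c : ℝ) :
    (x - fun _ => c) ⬝ᵥ L *ᵥ (x - fun _ => c) = x ⬝ᵥ L *ᵥ x := by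
  have hleft : (fun _ => c) ⬝ᵥ L *ᵥ x = 0 := by
    rw [dotProduct_mulVec, ← mulVec_transpose, hsym.eq, mulVec_const_eq_zero hrow, zero_dotProduct]
  rw [mulVec_sub, mulVec_const_eq_zero hrow, sub_zero, sub_dotProduct, hleft, sub_zero]

lemma exists_sum_eq_zero_dotProduct_mulVec_eq (hN : 0 < N) (hsym : L.IsSymm)
    (hrow : ∀ i, ∑ j, L i j = 0) (x : Fin N → ℝ) :
    ∃ y : Fin N → ℝ, ∑ i, y i = 0 ∧ ∑ i, y i ^ 2 = ∑ i, x i ^ 2 - (∑ i, x i) ^ 2 / N ∧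
      y ⬝ᵥ L *ᵥ y = x ⬝ᵥ L *ᵥ x := by
  have hN' : (N : ℝ) ≠ 0 := by positivity
  refine ⟨x - fun _ => (∑ i, x i) / N, ?_, ?_, dotProduct_mulVec_sub_const hsym hrow _ _⟩
  · simp only [Pi.sub_apply, Finset.sum_sub_distrib, Finset.sum_const, Finset.card_univ,
      Fintype.card_fin, nsmul_eq_mul]
    field_simp
    ring
  · simp only [Pi.sub_apply, sub_sq, Finset.sum_add_distrib, Finset.sum_sub_distrib,
      ← Finset.sum_mul, ← Finset.mul_sum, Finset.sum_const, Finset.card_univ,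
      Fintype.card_fin, nsmul_eq_mul]
    field_simp
    ring

/-- The matrix `I - αL - (1/N)J` whose `specNorm` is the paper's `γ₂(α)`. -/
noncomputable def offConsensusWeight (L : Matrix (Fin N) (Fin N) ℝ) (α : ℝ) :
    Matrix (Fin N) (Fin N) ℝ :=
  1 - α • L - (N : ℝ)⁻¹ • Matrix.of fun _ _ => (1 : ℝ)

lemma dotProduct_offConsensusWeight_mulVec (L : Matrix (Fin N) (Fin N) ℝ) (α : ℝ)
    (x : Fin N → ℝ) :
    x ⬝ᵥ offConsensusWeight L α *ᵥ x
      = ∑ i, x i ^ 2 - α * (x ⬝ᵥ L *ᵥ x) - (N : ℝ)⁻¹ * (∑ i, x i) ^ 2 := by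
  have hJ : x ⬝ᵥ (Matrix.of fun _ _ => (1 : ℝ)) *ᵥ x = (∑ i, x i) ^ 2 := by
    simp [dotProduct, mulVec, ← Finset.sum_mul, sq]
  have hI : x ⬝ᵥ x = ∑ i, x i ^ 2 := by simp [dotProduct, sq]
  rw [offConsensusWeight, sub_mulVec, sub_mulVec, one_mulVec, smul_mulVec, smul_mulVec,
    dotProduct_sub, dotProduct_sub, dotProduct_smul, dotProduct_smul, hJ, smul_eq_mul,
    smul_eq_mul, hI]

lemma specNorm_offConsensusWeight_le (hN : 0 < N) (hsym : L.IsSymm)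
    (hrow : ∀ i, ∑ j, L i j = 0) (hle : lambda2 L ≤ lambdaN L) (hα : 0 ≤ α) :
    specNorm (offConsensusWeight L α) ≤ max (1 - α * lambda2 L) (α * lambdaN L - 1) := by
  set m := max (1 - α * lambda2 L) (α * lambdaN L - 1)
  have hm₂ : 1 - α * lambda2 L ≤ m := le_max_left _ _
  have hmN : α * lambdaN L - 1 ≤ m := le_max_right _ _
  have hm : 0 ≤ m := by linarith [mul_le_mul_of_nonneg_left hle hα]
  refine specNorm_le hm fun x hx1 => ?_
  obtain ⟨y, hy0, hys, hyq⟩ := exists_sum_eq_zero_dotProduct_mulVec_eq hN hsym hrow x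
  set s := ∑ i, y i ^ 2
  have hs0 : 0 ≤ s := Finset.sum_nonneg fun i _ => sq_nonneg _
  have hs1 : s ≤ 1 := by rw [hys, hx1]; linarith [(by positivity : 0 ≤ (∑ i, x i) ^ 2 / N)]
  have hqlow : α * (lambda2 L * s) ≤ α * (y ⬝ᵥ L *ᵥ y) :=
    mul_le_mul_of_nonneg_left (lambda2_mul_sum_sq_le hy0) hα
  have hqhigh : α * (y ⬝ᵥ L *ᵥ y) ≤ α * (lambdaN L * s) :=
    mul_le_mul_of_nonneg_left (dotProduct_mulVec_le_lambdaN_mul y) hα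
  have hxy : x ⬝ᵥ offConsensusWeight L α *ᵥ x = s - α * (y ⬝ᵥ L *ᵥ y) := by
    rw [dotProduct_offConsensusWeight_mulVec, hyq, hys, div_eq_inv_mul]; ring
  have hsm : s * m ≤ m := mul_le_of_le_one_left hm hs1
  rw [hxy, abs_le]
  constructor
  · linarith [mul_le_mul_of_nonneg_left hmN hs0]
  · linarith [mul_le_mul_of_nonneg_left hm₂ hs0]

lemma one_sub_mul_lambda2_le_specNorm (hN : 1 < N) (hα : 0 < α) :
    1 - α * lambda2 L ≤ specNorm (offConsensusWeight L α) := by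
  have h : (1 - specNorm (offConsensusWeight L α)) / α ≤ lambda2 L := by
    refine le_lambda2 hN fun z hz1 hz0 => (div_le_iff₀' hα).2 ?_
    have hz := abs_le_specNorm (offConsensusWeight L α) hz1
    rw [dotProduct_offConsensusWeight_mulVec, hz1, hz0] at hz
    linarith [le_abs_self (1 - α * (z ⬝ᵥ L *ᵥ z) - (N : ℝ)⁻¹ * 0 ^ 2)]
  linarith [(div_le_iff₀' hα).1 h]

lemma mul_lambdaN_sub_one_le_specNorm (hN : 0 < N) (hα : 0 < α) :
    α * lambdaN L - 1 ≤ specNorm (offConsensusWeight L α) := by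
  have h : lambdaN L ≤ (1 + specNorm (offConsensusWeight L α)) / α := by
    refine lambdaN_le hN fun x hx1 => (le_div_iff₀' hα).2 ?_
    have hx := abs_le_specNorm (offConsensusWeight L α) hx1
    rw [dotProduct_offConsensusWeight_mulVec, hx1] at hx
    have hJ : 0 ≤ (N : ℝ)⁻¹ * (∑ i, x i) ^ 2 := by positivity
    linarith [neg_abs_le (1 - α * (x ⬝ᵥ L *ᵥ x) - (N : ℝ)⁻¹ * (∑ i, x i) ^ 2)]
  linarith [(le_div_iff₀' hα).1 h]

theorem specNorm_offConsensusWeight (hN : 1 < N) (hsym : L.IsSymm)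
    (hrow : ∀ i, ∑ j, L i j = 0) (hα : 0 < α) :
    specNorm (offConsensusWeight L α) = max (1 - α * lambda2 L) (α * lambdaN L - 1) :=
  le_antisymm
    (specNorm_offConsensusWeight_le (by omega) hsym hrow (lambda2_le_lambdaN hN) hα.le)
    (max_le (one_sub_mul_lambda2_le_specNorm hN hα) (mul_lambdaN_sub_one_le_specNorm (by omega) hα))

end

lemma max_one_sub_mul_two_div_add_le {a b : ℝ} (ha : 0 ≤ a) (hb : 0 ≤ b) (hab : 0 < a + b)
    (α : ℝ) : max (1 - 2 / (a + b) * a) (2 / (a + b) * b - 1) ≤ max (1 - α * a) (α * b - 1) := by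
  set α₀ := 2 / (a + b)
  have hbal : 1 - α₀ * a = α₀ * b - 1 := by
    simp only [α₀]; field_simp; ring
  rw [← hbal, max_self]
  rcases le_total α α₀ with h | h
  · exact le_max_of_le_left (by nlinarith)
  · exact le_max_of_le_right (by nlinarith)

theorem ANC_weight_matrix_spectral_norm_general
    {N : ℕ}
    (L : Matrix (Fin N) (Fin N) ℝ)
    (hLap : IsGraphLaplacian L) (hconn : 0 < lambda2 L) :
    (∀ α : ℝ, 0 < α → α < 2 / lambdaN L →
      specNorm ((1 : Matrix (Fin N) (Fin N) ℝ) - α • L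
        - (N : ℝ)⁻¹ • Matrix.of (fun _ _ => (1 : ℝ))) < 1)
    ∧ (∀ α : ℝ, 0 < α → α ≤ 2 / (lambda2 L + lambdaN L) →
      specNorm ((1 : Matrix (Fin N) (Fin N) ℝ) - α • L
        - (N : ℝ)⁻¹ • Matrix.of (fun _ _ => (1 : ℝ))) = 1 - α * lambda2 L)
    ∧ (∀ α : ℝ, 0 < α → α < 2 / lambdaN L →
      specNorm ((1 : Matrix (Fin N) (Fin N) ℝ)
          - (2 / (lambda2 L + lambdaN L)) • L
          - (N : ℝ)⁻¹ • Matrix.of (fun _ _ => (1 : ℝ)))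
        ≤ specNorm ((1 : Matrix (Fin N) (Fin N) ℝ) - α • L
          - (N : ℝ)⁻¹ • Matrix.of (fun _ _ => (1 : ℝ)))) := by
  obtain ⟨hsym, -, hrow⟩ := hLap
  have hN := one_lt_of_lambda2_pos hconn
  have hlambdaN : 0 < lambdaN L := hconn.trans_le (lambda2_le_lambdaN hN)
  have hρ : ∀ α, 0 < α → specNorm (offConsensusWeight L α)
      = max (1 - α * lambda2 L) (α * lambdaN L - 1) :=
    fun α hα => specNorm_offConsensusWeight hN hsym hrow hα
  refine ⟨fun α hα hαN => ?_, fun α hα hα₀ => ?_, fun α hα _ => ?_⟩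
  · rw [lt_div_iff₀ hlambdaN] at hαN
    exact (hρ α hα).trans_lt (max_lt (by nlinarith) (by linarith))
  · rw [le_div_iff₀ (by linarith)] at hα₀
    exact (hρ α hα).trans (max_eq_left (by linarith))
  · change specNorm (offConsensusWeight L _) ≤ specNorm (offConsensusWeight L α)
    rw [hρ _ (by positivity), hρ α hα]
    exact max_one_sub_mul_two_div_add_le hconn.le hlambdaN.le (by linarith) α

/-- Spectral norm of the A-NC weight matrix: for a connected graph Laplacian
`L` and `γ₂(α) = ρ(I − αL − (1/N)J)`:
(1) `γ₂(α) < 1` for `0 < α < 2/λ_N(L)`;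
(2) `γ₂(α) = 1 − αλ₂(L)` for `0 < α ≤ 2/(λ₂(L)+λ_N(L))`;
(3) over `0 < α < 2/λ_N(L)`, `γ₂` attains its minimum at
`α• = 2/(λ₂(L)+λ_N(L))`. -/
theorem ANC_weight_matrix_spectral_norm
    {N : ℕ} (hN : 0 < N)
    (L : Matrix (Fin N) (Fin N) ℝ)
    (hLap : IsGraphLaplacian L) (hconn : 0 < lambda2 L) :
    (∀ α : ℝ, 0 < α → α < 2 / lambdaN L →
      specNorm ((1 : Matrix (Fin N) (Fin N) ℝ) - α • L
        - (N : ℝ)⁻¹ • Matrix.of (fun _ _ => (1 : ℝ))) < 1)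
    ∧ (∀ α : ℝ, 0 < α → α ≤ 2 / (lambda2 L + lambdaN L) →
      specNorm ((1 : Matrix (Fin N) (Fin N) ℝ) - α • L
        - (N : ℝ)⁻¹ • Matrix.of (fun _ _ => (1 : ℝ))) = 1 - α * lambda2 L)
    ∧ (∀ α : ℝ, 0 < α → α < 2 / lambdaN L →
      specNorm ((1 : Matrix (Fin N) (Fin N) ℝ)
          - (2 / (lambda2 L + lambdaN L)) • L
          - (N : ℝ)⁻¹ • Matrix.of (fun _ _ => (1 : ℝ)))
        ≤ specNorm ((1 : Matrix (Fin N) (Fin N) ℝ) - α • L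
          - (N : ℝ)⁻¹ • Matrix.of (fun _ _ => (1 : ℝ)))) :=
  ANC_weight_matrix_spectral_norm_general L hLap hconn
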